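/- Let n ≥ 2, let Θ ⊆ S^{n-1} be a closed set not contained in any closed hemisphere, let ρ₀ : Θ → (0,∞) and g : Θ → ℝ be continuous, let δ > 0, and for s ∈ (-δ,δ) let ρ_s : Θ → (0,∞) be continuous with log ρ_s(v) = log ρ₀(v) + s g(v) + o(s,v), where o(s,·)/s → 0 uniformly on Θ as s → 0. Write ⟨ρ_s⟩ = conv{ρ_s(v) v : v ∈ Θ}. Then for every p ∈ ℝ there exist δ₀ ∈ (0,δ) and M > 0 such that |h_{⟨ρ_s⟩}(v)^{-p} − h_{⟨ρ₀⟩}(v)^{-p}| ≤ M|s| for all v ∈ S^{n-1} and all s ∈ (−δ₀,δ₀). -/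

import Mathlib

open MeasureTheory Metric Filter
open scoped InnerProductSpace ENNReal Topology

/-- The support function of a set `K`: `h_K(x) = sup_{y ∈ K} ⟪x, y⟫`. -/
noncomputable def suppFn {n : ℕ} (K : Set (EuclideanSpace ℝ (Fin n)))
    (x : EuclideanSpace ℝ (Fin n)) : ℝ :=
  sSup ((fun y => ⟪x, y⟫_ℝ) '' K)

/-- The radial function of a set `K`: `ρ_K(v) = max {c > 0 : c • v ∈ K}`. -/
noncomputable def radFn {n : ℕ} (K : Set (EuclideanSpace ℝ (Fin n)))
    (v : EuclideanSpace ℝ (Fin n)) : ℝ :=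
  sSup {c : ℝ | 0 < c ∧ c • v ∈ K}

/-!
The support function of `conv {ρ(w) w : w ∈ Θ}` at `v` is `sup_{w ∈ Θ} ρ(w) ⟪v, w⟫`, and it is
positive on the sphere because `Θ` lies in no closed hemisphere. Hence the uniform bound
`|log ρ_s - log ρ_0| ≤ C |s|` on `Θ` transfers to `|log h_s - log h_0| ≤ C |s|` on the sphere.
Since `log h_0` is bounded on the sphere and `h^(-p) = exp (-p log h)`, the claim follows from
`exp` being Lipschitz on half-lines.
-/

open Real Set

lemma abs_exp_sub_exp_le {x y B : ℝ} (hx : x ≤ B) (hy : y ≤ B) :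
    |exp x - exp y| ≤ exp B * |x - y| := by
  wlog hyx : y ≤ x generalizing x y
  · rw [abs_sub_comm, abs_sub_comm x]
    exact this hy hx (le_of_not_ge hyx)
  have hexp : exp x - exp y ≤ exp x * (x - y) := by
    have hsplit : exp y = exp x * exp (y - x) := by rw [← exp_add, add_sub_cancel]
    nlinarith [add_one_le_exp (y - x), exp_pos x]
  rw [abs_of_nonneg (sub_nonneg.2 (exp_le_exp.2 hyx)), abs_of_nonneg (sub_nonneg.2 hyx)]
  exact hexp.trans (mul_le_mul_of_nonneg_right (exp_le_exp.2 hx) (sub_nonneg.2 hyx))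

lemma abs_rpow_sub_rpow_le {x y q D t : ℝ} (hx : 0 < x) (hy : 0 < y) (hyD : |log y| ≤ D)
    (hxy : |log x - log y| ≤ t) :
    |x ^ q - y ^ q| ≤ exp (|q| * (D + t)) * (|q| * |log x - log y|) := by
  have hxD : |log x| ≤ D + t := by
    calc |log x| = |log y + (log x - log y)| := by rw [add_sub_cancel]
      _ ≤ D + t := (abs_add_le _ _).trans (add_le_add hyD hxy)
  have hbound : ∀ z, |z| ≤ D + t → z * q ≤ |q| * (D + t) := fun z hz =>
    (le_abs_self _).trans (by rw [abs_mul, mul_comm]; gcongr)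
  have hdiff : |q| * |log x - log y| = |log x * q - log y * q| := by
    rw [← sub_mul, abs_mul, mul_comm]
  rw [rpow_def_of_pos hx, rpow_def_of_pos hy, hdiff]
  exact abs_exp_sub_exp_le (hbound _ hxD) (hbound _ (hyD.trans (le_add_of_nonneg_right
    ((abs_nonneg _).trans hxy))))

lemma exists_abs_log_sub_le_mul_abs {α : Type*} {Θ : Set α} {ρ : ℝ → α → ℝ} {g : α → ℝ}
    (hg : ∃ G, ∀ v ∈ Θ, |g v| ≤ G)
    (hlog : ∀ ε > (0 : ℝ), ∃ δ' > (0 : ℝ), ∀ s : ℝ, |s| < δ' → s ≠ 0 → ∀ v ∈ Θ,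
      |log (ρ s v) - log (ρ 0 v) - s * g v| ≤ ε * |s|) :
    ∃ C > 0, ∃ δ' > 0, ∀ s : ℝ, |s| < δ' → ∀ v ∈ Θ, |log (ρ s v) - log (ρ 0 v)| ≤ C * |s| := by
  obtain ⟨G, hG⟩ := hg
  obtain ⟨δ', hδ', hρ⟩ := hlog 1 one_pos
  refine ⟨|G| + 1, by positivity, δ', hδ', fun s hs v hv => ?_⟩
  rcases eq_or_ne s 0 with rfl | hs0
  · simp
  calc |log (ρ s v) - log (ρ 0 v)| ≤ |log (ρ s v) - log (ρ 0 v) - s * g v| + |s * g v| := by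
        linarith [abs_sub_abs_le_abs_sub (log (ρ s v) - log (ρ 0 v)) (s * g v)]
    _ ≤ 1 * |s| + |G| * |s| := by
        rw [abs_mul, mul_comm |s|]
        exact add_le_add (hρ s hs hs0 v hv)
          (mul_le_mul_of_nonneg_right ((hG v hv).trans (le_abs_self G)) (abs_nonneg s))
    _ = (|G| + 1) * |s| := by ring

variable {n : ℕ}

lemma suppFn_convexHull (A : Set (EuclideanSpace ℝ (Fin n))) (x : EuclideanSpace ℝ (Fin n)) :
    suppFn (convexHull ℝ A) x = suppFn A x := by
  have hconv : ConvexOn ℝ univ (fun y : EuclideanSpace ℝ (Fin n) => ⟪x, y⟫_ℝ) :=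
    (innerₛₗ ℝ x).convexOn convex_univ
  by_cases hbdd : BddAbove ((fun y => ⟪x, y⟫_ℝ) '' A)
  · rcases A.eq_empty_or_nonempty with rfl | hA
    · simp
    refine le_antisymm (csSup_le ((hA.mono (subset_convexHull ℝ A)).image _) ?_)
      (csSup_le_csSup (hconv.bddAbove_convexHull (subset_univ A) hbdd) (hA.image _)
        (image_mono (subset_convexHull ℝ A)))
    rintro _ ⟨y, hy, rfl⟩
    obtain ⟨z, hz, hzy⟩ := hconv.exists_ge_of_mem_convexHull (subset_univ A) hy
    exact hzy.trans (le_csSup hbdd (mem_image_of_mem _ hz))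
  · have hbdd' : ¬BddAbove ((fun y => ⟪x, y⟫_ℝ) '' convexHull ℝ A) := fun h =>
      hbdd (h.mono (image_mono (subset_convexHull ℝ A)))
    simp only [suppFn, Real.sSup_of_not_bddAbove hbdd, Real.sSup_of_not_bddAbove hbdd']

lemma continuous_suppFn {A : Set (EuclideanSpace ℝ (Fin n))} (hA : IsCompact A) :
    Continuous (suppFn A) :=
  hA.continuous_sSup (f := fun x y => ⟪x, y⟫_ℝ) continuous_inner

lemma le_suppFn {A : Set (EuclideanSpace ℝ (Fin n))} (hA : IsCompact A)
    (x : EuclideanSpace ℝ (Fin n)) {y : EuclideanSpace ℝ (Fin n)} (hy : y ∈ A) : ⟪x, y⟫_ℝ ≤ suppFn A x :=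
  le_csSup (hA.image (continuous_const.inner continuous_id)).bddAbove (mem_image_of_mem _ hy)

lemma suppFn_le {A : Set (EuclideanSpace ℝ (Fin n))} (hA : A.Nonempty)
    {x : EuclideanSpace ℝ (Fin n)} {c : ℝ} (h : ∀ y ∈ A, ⟪x, y⟫_ℝ ≤ c) : suppFn A x ≤ c :=
  csSup_le (hA.image _) (by rintro _ ⟨y, hy, rfl⟩; exact h y hy)

section RadialImage

variable {Θ : Set (EuclideanSpace ℝ (Fin n))} {r r' : EuclideanSpace ℝ (Fin n) → ℝ}
  {v : EuclideanSpace ℝ (Fin n)}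

lemma suppFn_image_smul_pos (hK : IsCompact ((fun w => r w • w) '' Θ))
    (hr : ∀ w ∈ Θ, 0 < r w) (hv : ∃ w ∈ Θ, 0 < ⟪v, w⟫_ℝ) :
    0 < suppFn ((fun w => r w • w) '' Θ) v := by
  obtain ⟨w, hw, hvw⟩ := hv
  have hle := le_suppFn hK v (mem_image_of_mem _ hw)
  rw [real_inner_smul_right] at hle
  exact (mul_pos (hr w hw) hvw).trans_le hle

-- Terms with `⟪v, w⟫ < 0` are harmless because the support function is nonnegative.
lemma suppFn_image_smul_le_mul {c : ℝ} (hc : 0 ≤ c) (hΘ : Θ.Nonempty)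
    (hK : IsCompact ((fun w => r w • w) '' Θ)) (hr' : ∀ w ∈ Θ, 0 ≤ r' w)
    (hle : ∀ w ∈ Θ, r' w ≤ c * r w) (hpos : 0 ≤ suppFn ((fun w => r w • w) '' Θ) v) :
    suppFn ((fun w => r' w • w) '' Θ) v ≤ c * suppFn ((fun w => r w • w) '' Θ) v := by
  refine suppFn_le (hΘ.image _) ?_
  rintro _ ⟨w, hw, rfl⟩
  rw [real_inner_smul_right]
  rcases le_or_gt 0 ⟪v, w⟫_ℝ with hvw | hvw
  · calc r' w * ⟪v, w⟫_ℝ ≤ c * r w * ⟪v, w⟫_ℝ := mul_le_mul_of_nonneg_right (hle w hw) hvw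
      _ = c * ⟪v, r w • w⟫_ℝ := by rw [real_inner_smul_right, mul_assoc]
      _ ≤ c * suppFn ((fun w => r w • w) '' Θ) v :=
        mul_le_mul_of_nonneg_left (le_suppFn hK v (mem_image_of_mem _ hw)) hc
  · exact (mul_nonpos_of_nonneg_of_nonpos (hr' w hw) hvw.le).trans (mul_nonneg hc hpos)

lemma log_suppFn_image_smul_sub_le {t : ℝ} (hK : IsCompact ((fun w => r w • w) '' Θ))
    (hK' : IsCompact ((fun w => r' w • w) '' Θ)) (hr : ∀ w ∈ Θ, 0 < r w)
    (hr' : ∀ w ∈ Θ, 0 < r' w) (hv : ∃ w ∈ Θ, 0 < ⟪v, w⟫_ℝ)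
    (hlog : ∀ w ∈ Θ, log (r' w) - log (r w) ≤ t) :
    log (suppFn ((fun w => r' w • w) '' Θ) v) - log (suppFn ((fun w => r w • w) '' Θ) v) ≤ t := by
  have hpos := suppFn_image_smul_pos hK hr hv
  have hpos' := suppFn_image_smul_pos hK' hr' hv
  have hle : ∀ w ∈ Θ, r' w ≤ exp t * r w := fun w hw => by
    rw [← exp_log (hr w hw), ← exp_add, ← log_le_iff_le_exp (hr' w hw)]
    linarith [hlog w hw]
  have := suppFn_image_smul_le_mul (exp_pos t).le (hv.imp fun w h => h.1) hK
    (fun w hw => (hr' w hw).le) hle hpos.le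
  rw [sub_le_iff_le_add', log_le_iff_le_exp hpos', exp_add, exp_log hpos]
  linarith

lemma abs_log_suppFn_image_smul_sub_le {t : ℝ} (hK : IsCompact ((fun w => r w • w) '' Θ))
    (hK' : IsCompact ((fun w => r' w • w) '' Θ)) (hr : ∀ w ∈ Θ, 0 < r w)
    (hr' : ∀ w ∈ Θ, 0 < r' w) (hv : ∃ w ∈ Θ, 0 < ⟪v, w⟫_ℝ)
    (hlog : ∀ w ∈ Θ, |log (r' w) - log (r w)| ≤ t) :
    |log (suppFn ((fun w => r' w • w) '' Θ) v) - log (suppFn ((fun w => r w • w) '' Θ) v)| ≤ t :=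
  abs_sub_le_iff.2
    ⟨log_suppFn_image_smul_sub_le hK hK' hr hr' hv fun w hw => (abs_sub_le_iff.1 (hlog w hw)).1,
     log_suppFn_image_smul_sub_le hK' hK hr' hr hv fun w hw => (abs_sub_le_iff.1 (hlog w hw)).2⟩

end RadialImage

theorem stmt14_general (n : ℕ)
    (Θ : Set (EuclideanSpace ℝ (Fin n))) (hΘ_closed : IsClosed Θ)
    (hΘ_sub : Θ ⊆ sphere (0 : EuclideanSpace ℝ (Fin n)) 1)
    (hΘ_hemi : ∀ u ∈ sphere (0 : EuclideanSpace ℝ (Fin n)) 1, ∃ w ∈ Θ, ⟪w, u⟫_ℝ < 0)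
    (g : EuclideanSpace ℝ (Fin n) → ℝ) (hg : ContinuousOn g Θ)
    (δ : ℝ) (hδ : 0 < δ)
    (ρ : ℝ → EuclideanSpace ℝ (Fin n) → ℝ)
    (hρ_cont : ∀ s ∈ Set.Ioo (-δ) δ, ContinuousOn (ρ s) Θ)
    (hρ_pos : ∀ s ∈ Set.Ioo (-δ) δ, ∀ v ∈ Θ, 0 < ρ s v)
    (hlog : ∀ ε > (0 : ℝ), ∃ δ' > (0 : ℝ), ∀ s : ℝ, |s| < δ' → s ≠ 0 → ∀ v ∈ Θ,
      |Real.log (ρ s v) - Real.log (ρ 0 v) - s * g v| ≤ ε * |s|)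
    (p : ℝ) :
    ∃ δ₀ ∈ Set.Ioo (0 : ℝ) δ, ∃ M : ℝ, 0 < M ∧
      ∀ v ∈ sphere (0 : EuclideanSpace ℝ (Fin n)) 1, ∀ s : ℝ, |s| < δ₀ →
        |(suppFn (convexHull ℝ ((fun w => ρ s w • w) '' Θ)) v) ^ (-p)
          - (suppFn (convexHull ℝ ((fun w => ρ 0 w • w) '' Θ)) v) ^ (-p)| ≤ M * |s| := by
  have hΘ : IsCompact Θ := (isCompact_sphere 0 1).of_isClosed_subset hΘ_closed hΘ_sub
  have hK : ∀ s ∈ Ioo (-δ) δ, IsCompact ((fun w => ρ s w • w) '' Θ) := fun s hs =>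
    hΘ.image_of_continuousOn ((hρ_cont s hs).smul continuousOn_id)
  have hdir : ∀ v ∈ sphere (0 : EuclideanSpace ℝ (Fin n)) 1, ∃ w ∈ Θ, 0 < ⟪v, w⟫_ℝ := by
    intro v hv
    obtain ⟨w, hw, hwv⟩ := hΘ_hemi (-v) (by simpa using hv)
    exact ⟨w, hw, by rwa [inner_neg_right, neg_lt_zero, real_inner_comm] at hwv⟩
  have h0 : (0 : ℝ) ∈ Ioo (-δ) δ := ⟨neg_lt_zero.2 hδ, hδ⟩
  obtain ⟨C, hC, δ₁, hδ₁, hρ_log⟩ := exists_abs_log_sub_le_mul_abs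
    (by simpa only [Real.norm_eq_abs] using hΘ.exists_bound_of_continuousOn hg) hlog
  obtain ⟨D, hD⟩ := (isCompact_sphere (0 : EuclideanSpace ℝ (Fin n)) 1).exists_bound_of_continuousOn
    ((continuous_suppFn (hK 0 h0)).continuousOn.log fun v hv =>
      (suppFn_image_smul_pos (hK 0 h0) (hρ_pos 0 h0) (hdir v hv)).ne')
  set δ₀ := min δ₁ (δ / 2)
  have hδ₀δ : δ₀ < δ := (min_le_right _ _).trans_lt (half_lt_self hδ)
  refine ⟨δ₀, ⟨lt_min hδ₁ (half_pos hδ), hδ₀δ⟩, exp (|p| * (D + C * δ₀)) * ((|p| + 1) * C),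
    mul_pos (exp_pos _) (mul_pos (by positivity) hC), fun v hv s hs => ?_⟩
  have hs' : s ∈ Ioo (-δ) δ := abs_lt.1 (hs.trans hδ₀δ)
  have hlog_supp := abs_log_suppFn_image_smul_sub_le (hK 0 h0) (hK s hs') (hρ_pos 0 h0)
    (hρ_pos s hs') (hdir v hv) fun w hw => hρ_log s (hs.trans_le (min_le_left _ _)) w hw
  rw [suppFn_convexHull, suppFn_convexHull]
  calc _ ≤ exp (|-p| * (D + C * δ₀)) * (|-p| * |log _ - log _|) :=
        abs_rpow_sub_rpow_le (suppFn_image_smul_pos (hK s hs') (hρ_pos s hs') (hdir v hv))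
          (suppFn_image_smul_pos (hK 0 h0) (hρ_pos 0 h0) (hdir v hv))
          (by simpa only [Real.norm_eq_abs] using hD v hv)
          (hlog_supp.trans (by gcongr))
    _ ≤ exp (|p| * (D + C * δ₀)) * ((|p| + 1) * (C * |s|)) := by
        rw [abs_neg]
        gcongr
        linarith
    _ = _ := by ring

/-- Uniform Lipschitz-type estimate for `h^{-p}` along a logarithmic family of convex hulls:
there are `δ₀ ∈ (0,δ)` and `M > 0` with
`|h_{⟨ρ_s⟩}(v)^{-p} − h_{⟨ρ₀⟩}(v)^{-p}| ≤ M|s|` for all `v ∈ S^{n-1}` and `|s| < δ₀`. -/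
theorem stmt14 (n : ℕ) (hn : 2 ≤ n)
    (Θ : Set (EuclideanSpace ℝ (Fin n))) (hΘ_closed : IsClosed Θ)
    (hΘ_sub : Θ ⊆ sphere (0 : EuclideanSpace ℝ (Fin n)) 1)
    (hΘ_hemi : ∀ u ∈ sphere (0 : EuclideanSpace ℝ (Fin n)) 1, ∃ w ∈ Θ, ⟪w, u⟫_ℝ < 0)
    (g : EuclideanSpace ℝ (Fin n) → ℝ) (hg : ContinuousOn g Θ)
    (δ : ℝ) (hδ : 0 < δ)
    (ρ : ℝ → EuclideanSpace ℝ (Fin n) → ℝ)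
    (hρ_cont : ∀ s ∈ Set.Ioo (-δ) δ, ContinuousOn (ρ s) Θ)
    (hρ_pos : ∀ s ∈ Set.Ioo (-δ) δ, ∀ v ∈ Θ, 0 < ρ s v)
    (hlog : ∀ ε > (0 : ℝ), ∃ δ' > (0 : ℝ), ∀ s : ℝ, |s| < δ' → s ≠ 0 → ∀ v ∈ Θ,
      |Real.log (ρ s v) - Real.log (ρ 0 v) - s * g v| ≤ ε * |s|)
    (p : ℝ) :
    ∃ δ₀ ∈ Set.Ioo (0 : ℝ) δ, ∃ M : ℝ, 0 < M ∧
      ∀ v ∈ sphere (0 : EuclideanSpace ℝ (Fin n)) 1, ∀ s : ℝ, |s| < δ₀ →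
        |(suppFn (convexHull ℝ ((fun w => ρ s w • w) '' Θ)) v) ^ (-p)
          - (suppFn (convexHull ℝ ((fun w => ρ 0 w • w) '' Θ)) v) ^ (-p)| ≤ M * |s| :=
  stmt14_general n Θ hΘ_closed hΘ_sub hΘ_hemi g hg δ hδ ρ hρ_cont hρ_pos hlog p
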